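/- arXiv:1702.06608 — 2 statements merged into one kernel-verified Lean document; each statement's English description precedes it below -/
import Mathlib

section
/- For any t = (t₀, t₁) ∈ k², the 2×2 matrices Φ_t⁺ = [[t₁(x+y), y+z],[t₀(z-y), x-y]] and Φ_t⁻ = [[x-y, -(y+z)],[t₀(y-z), t₁(x+y)]] over S = k[x,y,z] satisfy Φ_t⁺ Φ_t⁻ = Q_t · I₂ = Φ_t⁻ Φ_t⁺, where Q_t = t₀(y²-z²) + t₁(x²-y²). -/
open MvPolynomial

noncomputable section

variable (k : Type) [Field k]

/-- `Q_t = t₀(y² - z²) + t₁(x² - y²)` in `S = k[x,y,z]`. -/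
def Qt (t₀ t₁ : k) : MvPolynomial (Fin 3) k :=
  C t₀ * ((X 1) ^ 2 - (X 2) ^ 2) + C t₁ * ((X 0) ^ 2 - (X 1) ^ 2)

/-- `Φ_t⁺ = [[t₁(x+y), y+z], [t₀(z-y), x-y]]`. -/
def PhiPlus (t₀ t₁ : k) : Matrix (Fin 2) (Fin 2) (MvPolynomial (Fin 3) k) :=
  !![C t₁ * (X 0 + X 1), X 1 + X 2;
     C t₀ * (X 2 - X 1), X 0 - X 1]

/-- `Φ_t⁻ = [[x-y, -(y+z)], [t₀(y-z), t₁(x+y)]]`. -/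
def PhiMinus (t₀ t₁ : k) : Matrix (Fin 2) (Fin 2) (MvPolynomial (Fin 3) k) :=
  !![X 0 - X 1, -(X 1 + X 2);
     C t₀ * (X 1 - X 2), C t₁ * (X 0 + X 1)]

/-- for any `t = (t₀,t₁) ∈ k²`, the pair `(Φ_t⁺, Φ_t⁻)` is a matrix
factorization of `Q_t` over `S = k[x,y,z]`:
`Φ_t⁺ Φ_t⁻ = Q_t · I₂ = Φ_t⁻ Φ_t⁺`. -/
theorem stmt_3 (t₀ t₁ : k) :
    PhiPlus k t₀ t₁ * PhiMinus k t₀ t₁ = Qt k t₀ t₁ • (1 : Matrix (Fin 2) (Fin 2) (MvPolynomial (Fin 3) k)) ∧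
    PhiMinus k t₀ t₁ * PhiPlus k t₀ t₁ = Qt k t₀ t₁ • (1 : Matrix (Fin 2) (Fin 2) (MvPolynomial (Fin 3) k)) := by
  constructor <;>
  · simp only [PhiPlus, PhiMinus, Qt]
    rw [Matrix.mul_fin_two, show ((1 : Matrix (Fin 2) (Fin 2) (MvPolynomial (Fin 3) k))) = !![1,0;0,1] by simp [Matrix.one_fin_two]]
    simp only [Matrix.smul_of, Matrix.smul_cons, smul_eq_mul, Matrix.smul_empty]
    congr 1 <;> ring

end
end

section
/- Let Q be the D̃₄ quiver (four sources 1,2,3,4, one sink 0) and let M be an indecomposable finite-dimensional representation of Q over a field k in which some structure map φ_i : V_i → W fails to be injective. Then M is isomorphic to one of the four simple representations S(i), i = 1,2,3,4, having k at vertex i and 0 elsewhere. -/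
/-- A representation of the `D̃₄` quiver (four sources `1,2,3,4`, one central sink `0`)
over a field `k`: vector spaces `V i` at the sources, `W` at the sink, and structure
maps `φ i : V i → W`. -/
structure D4Rep (k : Type) [Field k] where
  W : Type
  V : Fin 4 → Type
  [accW : AddCommGroup W]
  [accV : ∀ i, AddCommGroup (V i)]
  [modW : Module k W]
  [modV : ∀ i, Module k (V i)]
  φ : ∀ i, V i →ₗ[k] W

attribute [instance] D4Rep.accW D4Rep.accV D4Rep.modW D4Rep.modV

variable {k : Type} [Field k]

/-- An internal direct sum decomposition `M = A ⊕ B` of a `D̃₄`-representation: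
complementary subspaces at each vertex, each family invariant under the structure maps. -/
structure D4Decomp (M : D4Rep k) where
  AW : Submodule k M.W
  BW : Submodule k M.W
  AV : ∀ i, Submodule k (M.V i)
  BV : ∀ i, Submodule k (M.V i)
  complW : IsCompl AW BW
  complV : ∀ i, IsCompl (AV i) (BV i)
  invA : ∀ i, (AV i).map (M.φ i) ≤ AW
  invB : ∀ i, (BV i).map (M.φ i) ≤ BW

/-- A `D̃₄`-representation is indecomposable if it is nonzero and in every internal
direct sum decomposition one of the two summands is zero. -/
def D4Indecomposable (M : D4Rep k) : Prop :=
  (Nontrivial M.W ∨ ∃ i, Nontrivial (M.V i)) ∧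
  ∀ D : D4Decomp M,
    (D.AW = ⊥ ∧ ∀ i, D.AV i = ⊥) ∨ (D.BW = ⊥ ∧ ∀ i, D.BV i = ⊥)

/-- if `M` is an indecomposable finite-dimensional representation of the
`D̃₄` quiver in which some structure map `φ i` fails to be injective, then `M` is
isomorphic to one of the four simple representations `S(i)` (`k` at vertex `i`, `0`
elsewhere); i.e. its dimension vector is that of some `S(i)`. -/
theorem stmt_9 (M : D4Rep k) [FiniteDimensional k M.W] [∀ i, FiniteDimensional k (M.V i)]
    (hM : D4Indecomposable M) (hni : ∃ i, ¬ Function.Injective (M.φ i)) :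
    ∃ i : Fin 4, Module.finrank k (M.V i) = 1 ∧
      (∀ j : Fin 4, j ≠ i → Module.finrank k (M.V j) = 0) ∧
      Module.finrank k M.W = 0 := by
  classical
  obtain ⟨i, hi⟩ := hni
  have hker : LinearMap.ker (M.φ i) ≠ ⊥ := by
    simpa [LinearMap.ker_eq_bot] using hi
  obtain ⟨K, hK⟩ := Submodule.exists_isCompl (LinearMap.ker (M.φ i))
  -- First decomposition
  set D1 : D4Decomp M :=
    { AW := ⊥
      BW := ⊤
      AV := fun j => if h : j = i then h ▸ LinearMap.ker (M.φ i) else ⊥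
      BV := fun j => if h : j = i then h ▸ K else ⊤
      complW := isCompl_bot_top
      complV := by
        intro j
        by_cases h : j = i
        · subst h; simpa using hK
        · simp only [dif_neg h]; exact isCompl_bot_top
      invA := by
        intro j
        by_cases h : j = i
        · subst h
          simp only [dif_pos]
          rintro x ⟨y, hy, rfl⟩
          simpa using hy
        · simp [h]
      invB := fun j => le_top }
  rcases (hM.2 D1) with ⟨hA, hAV⟩ | ⟨hB, hBV⟩
  · exact absurd (by simpa [D1] using hAV i) hker
  · -- W = 0, V j = 0 for j ≠ i, K = ⊥ so ker = ⊤
    have hWtop : (⊤ : Submodule k M.W) = ⊥ := by simpa [D1] using hB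
    have hWrank : Module.finrank k M.W = 0 := by
      rw [← finrank_top k, hWtop, finrank_bot]
    have hVj : ∀ j, j ≠ i → (⊤ : Submodule k (M.V j)) = ⊥ := by
      intro j hj
      simpa [D1, hj] using hBV j
    have hVjrank : ∀ j, j ≠ i → Module.finrank k (M.V j) = 0 := by
      intro j hj
      rw [← finrank_top k, hVj j hj, finrank_bot]
    have hKbot : K = ⊥ := by simpa [D1] using hBV i
    have hkertop : LinearMap.ker (M.φ i) = ⊤ := by
      have := hK.sup_eq_top
      rwa [hKbot, sup_bot_eq] at this
    have hphi0 : M.φ i = 0 := LinearMap.ker_eq_top.mp hkertop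
    -- subsingleton instances
    have hWsub : Subsingleton M.W := Module.finrank_zero_iff.mp hWrank
    have hVsub : ∀ j, j ≠ i → Subsingleton (M.V j) := fun j hj =>
      Module.finrank_zero_iff.mp (hVjrank j hj)
    -- V i is nontrivial
    have hVi : Nontrivial (M.V i) := by
      rcases hM.1 with h | ⟨j, hj⟩
      · exact absurd h (not_nontrivial_iff_subsingleton.mpr hWsub)
      · by_cases hji : j = i
        · exact hji ▸ hj
        · exact absurd hj (not_nontrivial_iff_subsingleton.mpr (hVsub j hji))
    obtain ⟨x, hx⟩ := exists_ne (0 : M.V i)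
    obtain ⟨C, hC⟩ := Submodule.exists_isCompl (Submodule.span k {x})
    -- second decomposition
    set D2 : D4Decomp M :=
      { AW := ⊤
        BW := ⊥
        AV := fun j => if h : j = i then h ▸ Submodule.span k {x} else ⊤
        BV := fun j => if h : j = i then h ▸ C else ⊥
        complW := isCompl_top_bot
        complV := by
          intro j
          by_cases h : j = i
          · subst h; simpa using hC
          · simp only [dif_neg h]; exact isCompl_top_bot
        invA := fun j => le_top
        invB := by
          intro j
          by_cases h : j = i
          · subst h; simp [hphi0]
          · simp [h] }
    rcases (hM.2 D2) with ⟨hA2, hAV2⟩ | ⟨_, hBV2⟩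
    · have : Submodule.span k {x} = ⊥ := by simpa [D2] using hAV2 i
      exact absurd (Submodule.span_singleton_eq_bot.mp this) hx
    · have hCbot : C = ⊥ := by simpa [D2] using hBV2 i
      have hspan : Submodule.span k {x} = ⊤ := by
        have := hC.sup_eq_top
        rwa [hCbot, sup_bot_eq] at this
      refine ⟨i, ?_, hVjrank, hWrank⟩
      rw [← finrank_top k, ← hspan, finrank_span_singleton hx]
end
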